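/- Any set of pairwise distinct, pairwise commuting N-qubit Pauli strings, none of which is the identity string I^{⊗N}, has cardinality at most 2^N − 1. -/

import Mathlib

open Matrix Finset

inductive Pauli : Type
  | I | X | Y | Z
  deriving DecidableEq

instance : Fintype Pauli :=
  ⟨{.I, .X, .Y, .Z}, fun x => by cases x <;> simp⟩

noncomputable def Pauli.mat : Pauli → Matrix (Fin 2) (Fin 2) ℂ
  | .I => 1
  | .X => !![0, 1; 1, 0]
  | .Y => !![0, -Complex.I; Complex.I, 0]
  | .Z => !![1, 0; 0, -1]

/-- An `N`-qubit Pauli string: a function from qubit indices to single-qubit Paulis. -/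
abbrev PauliString (N : ℕ) := Fin N → Pauli

/-- The `2^N × 2^N` matrix of a Pauli string, as the tensor (Kronecker) product of its
entries, with rows/columns indexed by `Fin N → Fin 2`. -/
noncomputable def Pmat {N : ℕ} (A : PauliString N) :
    Matrix (Fin N → Fin 2) (Fin N → Fin 2) ℂ :=
  Matrix.of fun x y => ∏ j, (A j).mat (x j) (y j)

/-!
Up to a phase every Pauli string is `X^x Z^z` for a unique `(x, z) ∈ 𝔽₂^N × 𝔽₂^N`, the identity
string corresponding to `0`. Two strings commute or anticommute according to the parity of the
number of qubits on which their factors anticommute, which is the standard symplectic form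
`ω((x, z), (x', z')) = z·x' - x·z'`. A commuting family therefore spans an isotropic subspace of
`𝔽₂^{2N}`; since `ω` is nondegenerate such a subspace has dimension at most `N`, so it has at most
`2^N` elements, one of which is `0` and not the image of a family member.
-/

namespace Matrix

variable {ι n R : Type*} [Fintype ι] [CommSemiring R]

def piKron (M : ι → Matrix n n R) : Matrix (ι → n) (ι → n) R :=
  of fun x y => ∏ j, M j (x j) (y j)

lemma piKron_mul [DecidableEq ι] [Fintype n] (M M' : ι → Matrix n n R) :
    piKron M * piKron M' = piKron fun j => M j * M' j := by
  ext x y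
  simp only [piKron, mul_apply, of_apply, ← prod_mul_distrib]
  exact (Fintype.prod_sum fun j t => M j (x j) t * M' j t (y j)).symm

lemma piKron_smul (c : ι → R) (M : ι → Matrix n n R) :
    piKron (fun j => c j • M j) = (∏ j, c j) • piKron M := by
  ext x y
  simp [piKron, prod_mul_distrib]

lemma piKron_one [DecidableEq n] : piKron (fun _ : ι => (1 : Matrix n n R)) = 1 := by
  ext x y
  simp [piKron, one_apply, Finset.prod_ite_zero, funext_iff]

lemma toBilin'_J_apply {l K : Type*} [Fintype l] [DecidableEq l] [CommRing K]
    (v w : l ⊕ l → K) :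
    (J l K).toBilin' v w = ∑ i, (v (.inr i) * w (.inl i) - v (.inl i) * w (.inr i)) := by
  simp [toBilin'_apply, J, Fintype.sum_sum_type, one_apply, Finset.sum_sub_distrib]
  abel

lemma nondegenerate_toBilin'_J (l K : Type*) [Fintype l] [DecidableEq l] [Field K] :
    (J l K).toBilin'.Nondegenerate :=
  LinearMap.BilinForm.nondegenerate_toBilin'_of_det_ne_zero' _ (isUnit_det_J l K).ne_zero

end Matrix

namespace LinearMap.BilinForm

variable {K V : Type*} [Field K] [AddCommGroup V] [Module K V] {B : LinearMap.BilinForm K V}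

lemma span_le_orthogonal_span {s : Set V} (hs : ∀ x ∈ s, ∀ y ∈ s, B x y = 0) :
    Submodule.span K s ≤ B.orthogonal (Submodule.span K s) :=
  Submodule.span_le.2 fun y hy => (mem_orthogonal_iff).2 fun _ hx =>
    (Submodule.span_le (p := LinearMap.ker (B.flip y))).2 (fun x hx' => hs x hx' y hy) hx

lemma two_mul_finrank_le_of_le_orthogonal [FiniteDimensional K V] (hB : B.Nondegenerate)
    {W : Submodule K V} (hW : W ≤ B.orthogonal W) :
    2 * Module.finrank K W ≤ Module.finrank K V := by
  have := Submodule.finrank_mono hW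
  have := Submodule.finrank_le W
  rw [finrank_orthogonal hB] at *
  omega

lemma card_add_one_le_of_isotropic [Fintype K] [FiniteDimensional K V] (hB : B.Nondegenerate)
    {s : Finset V} (h0 : 0 ∉ s) (hs : ∀ x ∈ s, ∀ y ∈ s, B x y = 0) :
    #s + 1 ≤ Fintype.card K ^ (Module.finrank K V / 2) := by
  classical
  have : Finite V := Module.finite_of_finite K
  have hW := two_mul_finrank_le_of_le_orthogonal hB (span_le_orthogonal_span hs)
  have hsub : (↑(insert 0 s) : Set V) ⊆ Submodule.span K (s : Set V) := by
    rw [coe_insert]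
    exact Set.insert_subset (Submodule.zero_mem _) Submodule.subset_span
  calc #s + 1 = (↑(insert 0 s) : Set V).ncard := by
        rw [Set.ncard_coe_finset, card_insert_of_notMem h0]
    _ ≤ Nat.card (Submodule.span K (s : Set V)) := Set.ncard_le_ncard hsub
    _ = Fintype.card K ^ Module.finrank K (Submodule.span K (s : Set V)) := by
      rw [Module.natCard_eq_pow_finrank (K := K), Nat.card_eq_fintype_card]
    _ ≤ Fintype.card K ^ (Module.finrank K V / 2) :=
      Nat.pow_le_pow_right Fintype.card_pos (by omega)

end LinearMap.BilinForm

lemma AddChar.map_sum_eq_prod {ι A M : Type*} [AddCommMonoid A] [CommMonoid M]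
    (ψ : AddChar A M) (s : Finset ι) (f : ι → A) : ψ (∑ i ∈ s, f i) = ∏ i ∈ s, ψ (f i) :=
  map_prod ψ.toMonoidHom (fun i => Multiplicative.ofAdd (f i)) s

noncomputable def signChar : AddChar (ZMod 2) ℂ :=
  AddChar.zmodChar 2 (by norm_num : (-1 : ℂ) ^ 2 = 1)

lemma signChar_apply (t : ZMod 2) : signChar t = if t = 0 then 1 else -1 := by
  rw [signChar, AddChar.zmodChar_apply]
  obtain rfl | rfl : t = 0 ∨ t = 1 := by revert t; decide
  · simp
  · simp [ZMod.val_one]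

lemma signChar_eq_one_iff {t : ZMod 2} : signChar t = 1 ↔ t = 0 := by
  rw [signChar_apply]
  split_ifs with h <;> norm_num [h]

namespace Pauli

/-- Symplectic coordinates: `p.mat` is `X ^ p.x * Z ^ p.z` up to a phase. -/
def x : Pauli → ZMod 2
  | .X | .Y => 1
  | .I | .Z => 0

def z : Pauli → ZMod 2
  | .Z | .Y => 1
  | .I | .X => 0

lemma eq_of_x_eq_of_z_eq {a b : Pauli} (hx : a.x = b.x) (hz : a.z = b.z) : a = b := by
  cases a <;> cases b <;> first | rfl | simp_all [x, z]

lemma mat_mul_self (a : Pauli) : a.mat * a.mat = 1 := by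
  cases a <;> ext i j <;> fin_cases i <;> fin_cases j <;> simp [mat, one_fin_two]

lemma mat_commutation (a b : Pauli) :
    b.mat * a.mat = signChar (a.z * b.x - a.x * b.z) • (a.mat * b.mat) := by
  cases a <;> cases b <;> ext i j <;> fin_cases i <;> fin_cases j <;>
    simp [signChar_apply, x, z, mat, one_fin_two]

end Pauli

section PauliString

variable {N : ℕ}

def toSymplectic (A : PauliString N) : Fin N ⊕ Fin N → ZMod 2 :=
  Sum.elim (fun j => (A j).x) (fun j => (A j).z)

lemma toSymplectic_injective : Function.Injective (toSymplectic (N := N)) :=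
  fun _ _ h => funext fun j =>
    Pauli.eq_of_x_eq_of_z_eq (congrFun h (.inl j)) (congrFun h (.inr j))

lemma toSymplectic_eq_zero_iff {A : PauliString N} :
    toSymplectic A = 0 ↔ A = fun _ => Pauli.I := by
  have : toSymplectic (fun _ : Fin N => Pauli.I) = 0 := by
    ext (j | j) <;> rfl
  rw [← this, toSymplectic_injective.eq_iff]

lemma Pmat_eq_piKron (A : PauliString N) : Pmat A = piKron fun j => (A j).mat := rfl

lemma Pmat_mul_self (A : PauliString N) : Pmat A * Pmat A = 1 := by
  simp only [Pmat_eq_piKron, piKron_mul, Pauli.mat_mul_self, piKron_one]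

lemma Pmat_commutation (A B : PauliString N) :
    Pmat B * Pmat A =
      signChar ((J (Fin N) (ZMod 2)).toBilin' (toSymplectic A) (toSymplectic B)) •
        (Pmat A * Pmat B) := by
  have hqubit : (fun j => (B j).mat * (A j).mat) =
      fun j => signChar ((A j).z * (B j).x - (A j).x * (B j).z) • ((A j).mat * (B j).mat) :=
    funext fun j => Pauli.mat_commutation (A j) (B j)
  rw [Pmat_eq_piKron, Pmat_eq_piKron, piKron_mul, piKron_mul, hqubit, piKron_smul,
    toBilin'_J_apply, AddChar.map_sum_eq_prod]
  rfl

lemma Pmat_commute_iff (A B : PauliString N) :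
    Pmat A * Pmat B = Pmat B * Pmat A ↔
      (J (Fin N) (ZMod 2)).toBilin' (toSymplectic A) (toSymplectic B) = 0 := by
  have hinv : Pmat A * Pmat B * (Pmat B * Pmat A) = 1 := by
    rw [mul_assoc, ← mul_assoc (Pmat B), Pmat_mul_self, one_mul, Pmat_mul_self]
  have hne : Pmat A * Pmat B ≠ 0 := fun h => one_ne_zero (by rw [← hinv, h, zero_mul])
  rw [Pmat_commutation A B, ← signChar_eq_one_iff, eq_comm, ← (smul_left_injective ℂ hne).eq_iff,
    one_smul]

end PauliString

/-- Any set of pairwise distinct, pairwise commuting `N`-qubit Pauli strings, none of which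
is the identity string, has cardinality at most `2^N - 1`. -/
theorem commuting_family_card_le {N : ℕ} (S : Finset (PauliString N))
    (hid : ∀ A ∈ S, A ≠ fun _ => Pauli.I)
    (hcomm : ∀ A ∈ S, ∀ B ∈ S, Pmat A * Pmat B = Pmat B * Pmat A) :
    S.card ≤ 2 ^ N - 1 := by
  have h0 : 0 ∉ S.image toSymplectic := by
    simpa [toSymplectic_eq_zero_iff] using hid
  have hiso : ∀ v ∈ S.image toSymplectic, ∀ w ∈ S.image toSymplectic,
      (J (Fin N) (ZMod 2)).toBilin' v w = 0 := by
    simp only [forall_mem_image]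
    exact fun A hA B hB => (Pmat_commute_iff A B).1 (hcomm A hA B hB)
  have := LinearMap.BilinForm.card_add_one_le_of_isotropic (K := ZMod 2)
    (nondegenerate_toBilin'_J (Fin N) (ZMod 2)) h0 hiso
  rw [card_image_of_injective S toSymplectic_injective, ZMod.card,
    Module.finrank_fintype_fun_eq_card, Fintype.card_sum, Fintype.card_fin, ← two_mul,
    Nat.mul_div_cancel_left _ two_pos] at this
  omega
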